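/- The map α : ZMod 16 → Fin 7 given by the sequence 1,2,3,4,5,7,2,3,4,5,1,2,3,4,6,7 at positions 0,1,…,15 is a proper 7-colouring of the graph G₁₆; in particular the chromatic number of G₁₆ is at most 7. -/

import Mathlib

/-- The 7-colouring `α` of the 16 vertices, given by the sequence
`1,2,3,4,5,7,2,3,4,5,1,2,3,4,6,7` at positions `0,…,15`. -/
def α16 : ZMod 16 → Fin 7 :=
  fun i => ![1, 2, 3, 4, 5, 7, 2, 3, 4, 5, 1, 2, 3, 4, 6, 7] ⟨i.val, ZMod.val_lt i⟩

/-- The 8-colouring `β` given by `β i = i mod 8`. -/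
def β16 : ZMod 16 → Fin 8 := fun i => Fin.ofNat 8 i.val

/-- The graph `G₁₆` on `ZMod 16`: `i` is adjacent to `j` iff `i ≠ j` and either the circular
distance between `i` and `j` is at most `4`, or both `α16 i ≠ α16 j` and `β16 i ≠ β16 j`. -/
def G16 : SimpleGraph (ZMod 16) where
  Adj i j := i ≠ j ∧
    (min (i - j).val (j - i).val ≤ 4 ∨ (α16 i ≠ α16 j ∧ β16 i ≠ β16 j))
  symm := ⟨by
    rintro i j ⟨h1, h2⟩
    refine ⟨h1.symm, ?_⟩
    rcases h2 with h | ⟨ha, hb⟩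
    · exact Or.inl (by rwa [min_comm])
    · exact Or.inr ⟨ha.symm, hb.symm⟩⟩
  loopless := ⟨fun i h => h.1 rfl⟩

/-- Any five cyclically consecutive entries of the sequence `α16` are distinct. -/
theorem α16_ne_of_ne_of_circDist_le_four :
    ∀ i j : ZMod 16, i ≠ j → min (i - j).val (j - i).val ≤ 4 → α16 i ≠ α16 j := by
  decide

theorem α16_ne_of_G16_adj {i j : ZMod 16} (h : G16.Adj i j) : α16 i ≠ α16 j := by
  obtain ⟨hne, hclose | ⟨hα, -⟩⟩ := h
  · exact α16_ne_of_ne_of_circDist_le_four i j hne hclose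
  · exact hα

def α16Coloring : G16.Coloring (Fin 7) :=
  SimpleGraph.Coloring.mk α16 α16_ne_of_G16_adj

/-- `α16` is a proper 7-colouring of `G₁₆`; in particular the chromatic number of `G₁₆`
is at most `7`. -/
theorem statement4 :
    (∀ i j : ZMod 16, G16.Adj i j → α16 i ≠ α16 j) ∧ G16.chromaticNumber ≤ 7 :=
  ⟨fun _ _ => α16_ne_of_G16_adj, α16Coloring.colorable.chromaticNumber_le⟩
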